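/- Let A = [a_ij] be an n×n fully indecomposable symmetric (0,1)-matrix which is the pattern of an RCDS doubly stochastic matrix. Then there exist a symmetric RCDS doubly stochastic matrix X = [x_ij] with ξ(X) = ξ(A) and a real vector w = (w_1,…,w_n) such that x_ij = a_ij · (w_i + w_j) for all 1 ≤ i, j ≤ n. -/

import Mathlib

/-! Symmetrizing a witness `Y` to `(Y + Yᵀ) / 2` keeps it doubly stochastic and RCDS: since `A` is
symmetric, `Y` and `Yᵀ` have the same positive entries, and a positive diagonal `σ` of `Yᵀ` is the
positive diagonal `σ⁻¹` of `Y`.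

An RCDS doubly stochastic matrix `Z` is orthogonal to every matrix `M` with zero line sums that is
supported inside the support of `Z`: `Z + ε M` is still doubly stochastic for small `ε > 0`, and by
Birkhoff's theorem its pairing with `Z`, like that of `Z` itself, is a convex combination of
positive diagonal sums of `Z`, all of which are equal. By duality, `Z` lies in the span of the
matrices `a_ij (u_i + v_j)`. If `Z` is symmetric, then `u_i + v_j = u_j + v_i` whenever
`a_ij = 1`, so `w = (u + v) / 2` works. -/

/-- `X` is doubly stochastic. -/
def DoublyStochastic {n : ℕ} (X : Matrix (Fin n) (Fin n) ℝ) : Prop :=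
  (∀ i j, 0 ≤ X i j) ∧ (∀ i, ∑ j, X i j = 1) ∧ (∀ j, ∑ i, X i j = 1)

/-- `X` has restricted constant diagonal sums. -/
def RCDS {n : ℕ} (X : Matrix (Fin n) (Fin n) ℝ) : Prop :=
  ∀ σ τ : Equiv.Perm (Fin n), (∀ i, 0 < X i (σ i)) → (∀ i, 0 < X i (τ i)) →
    ∑ i, X i (σ i) = ∑ i, X i (τ i)

/-- `A` is fully indecomposable. -/
def FullyIndecomposable {n : ℕ} (A : Matrix (Fin n) (Fin n) ℝ) : Prop :=
  ¬ ∃ (I J : Finset (Fin n)), I.Nonempty ∧ J.Nonempty ∧ I.card + J.card = n ∧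
      ∀ i ∈ I, ∀ j ∈ J, A i j = 0

open Finset Filter Topology
open scoped Matrix

section PermMatrix

variable {ι R : Type*} [Fintype ι] [DecidableEq ι]

lemma sum_smul_permMatrix_apply [Semiring R] (w : Equiv.Perm ι → R) (i j : ι) :
    (∑ σ, w σ • σ.permMatrix R) i j = ∑ σ with σ i = j, w σ := by
  simp [Matrix.sum_apply, Equiv.Perm.permMatrix, PEquiv.toMatrix_apply, Equiv.toPEquiv_apply,
    Finset.sum_filter]

lemma le_sum_smul_permMatrix_apply [Semiring R] [PartialOrder R] [IsOrderedAddMonoid R]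
    {w : Equiv.Perm ι → R} (hw : ∀ σ, 0 ≤ w σ) (σ : Equiv.Perm ι) (i : ι) :
    w σ ≤ (∑ τ, w τ • τ.permMatrix R) i (σ i) := by
  rw [sum_smul_permMatrix_apply]
  exact single_le_sum (fun τ _ => hw τ) (by simp)

lemma sum_mul_sum_smul_permMatrix_apply [CommSemiring R] (Z : Matrix ι ι R)
    (w : Equiv.Perm ι → R) :
    ∑ i : ι, ∑ j : ι, Z i j * (∑ σ, w σ • σ.permMatrix R) i j =
      ∑ σ : Equiv.Perm ι, w σ * ∑ i, Z i (σ i) := by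
  simp only [sum_smul_permMatrix_apply, sum_filter, mul_sum]
  calc _ = ∑ i, ∑ σ : Equiv.Perm ι, w σ * Z i (σ i) := by
        refine sum_congr rfl fun i _ => ?_
        rw [sum_comm]
        simp [mul_comm]
    _ = _ := sum_comm

end PermMatrix

section Birkhoff

variable {ι : Type*} [Fintype ι] [DecidableEq ι]

lemma exists_perm_forall_pos_of_mem_doublyStochastic {R : Type*} [Field R] [LinearOrder R]
    [IsStrictOrderedRing R] {X : Matrix ι ι R} (hX : X ∈ doublyStochastic R ι) :
    ∃ σ : Equiv.Perm ι, ∀ i, 0 < X i (σ i) := by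
  obtain ⟨w, hw0, hw1, rfl⟩ := exists_eq_sum_perm_of_mem_doublyStochastic hX
  obtain ⟨σ, -, hσ⟩ := exists_ne_zero_of_sum_ne_zero (hw1 ▸ one_ne_zero)
  exact ⟨σ, fun i => ((hw0 σ).lt_of_ne' hσ).trans_le (le_sum_smul_permMatrix_apply hw0 σ i)⟩

lemma exists_pos_add_smul_mem_doublyStochastic {Z M : Matrix ι ι ℝ}
    (hZ : Z ∈ doublyStochastic ℝ ι) (hMZ : ∀ i j, Z i j = 0 → M i j = 0)
    (hrow : ∀ i, ∑ j, M i j = 0) (hcol : ∀ j, ∑ i, M i j = 0) :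
    ∃ ε : ℝ, 0 < ε ∧ Z + ε • M ∈ doublyStochastic ℝ ι := by
  have hnonneg : ∀ᶠ c in 𝓝 (0 : ℝ), ∀ i j, 0 ≤ Z i j + c * M i j := by
    simp only [eventually_all]
    intro i j
    rcases (nonneg_of_mem_doublyStochastic hZ (i := i) (j := j)).eq_or_lt with h | h
    · exact .of_forall fun c => by simp [← h, hMZ i j h.symm]
    · have hcont : Tendsto (fun c : ℝ => Z i j + c * M i j) (𝓝 0) (𝓝 (Z i j)) :=
        (continuous_const.add (continuous_id.mul continuous_const)).tendsto' _ _ (by simp)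
      exact (hcont.eventually (lt_mem_nhds h)).mono fun _ => le_of_lt
  obtain ⟨ε, hε, hε_pos⟩ :=
    ((hnonneg.filter_mono (nhdsWithin_le_nhds (s := Set.Ioi 0))).and self_mem_nhdsWithin).exists
  refine ⟨ε, hε_pos, mem_doublyStochastic_iff_sum.2 ⟨hε, fun i => ?_, fun j => ?_⟩⟩
  · simp [sum_add_distrib, ← mul_sum, hrow, sum_row_of_mem_doublyStochastic hZ]
  · simp [sum_add_distrib, ← mul_sum, hcol, sum_col_of_mem_doublyStochastic hZ]

end Birkhoff

lemma Submodule.mem_of_forall_dotProduct_eq_zero {K ι : Type*} [Field K] [Fintype ι]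
    {W : Submodule K (ι → K)} {z : ι → K}
    (h : ∀ m : ι → K, (∀ w ∈ W, w ⬝ᵥ m = 0) → z ⬝ᵥ m = 0) : z ∈ W := by
  classical
  by_contra hz
  obtain ⟨f, hfz, hfW⟩ := W.exists_dual_map_eq_bot_of_notMem hz inferInstance
  have hf : ∀ x, f x = x ⬝ᵥ fun i => f (Pi.single i 1) := fun x => by
    rw [f.pi_apply_eq_sum_univ, dotProduct]
    congr! with i j
    simp [Pi.single_apply, eq_comm]
  refine hfz ?_
  rw [hf]
  refine h _ fun w hw => ?_
  rw [← hf, ← Submodule.mem_bot K, ← hfW]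
  exact Submodule.mem_map_of_mem hw

lemma exists_eq_mul_add_of_isSymm {ι K : Type*} [Field K] [CharZero K] {A Z : Matrix ι ι K}
    (hA : A.IsSymm) (hZ : Z.IsSymm) {u v : ι → K} (huv : ∀ i j, Z i j = A i j * (u i + v j)) :
    ∃ w : ι → K, ∀ i j, Z i j = A i j * (w i + w j) := by
  refine ⟨fun i => (u i + v i) / 2, fun i j => ?_⟩
  rw [huv]
  rcases eq_or_ne (A i j) 0 with h | h
  · simp [h]
  · have hswap : u i + v j = u j + v i := by
      refine mul_left_cancel₀ h ?_
      rw [← huv, ← hZ.apply i j, huv, hA.apply i j]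
    congr 1
    linear_combination hswap / 2

namespace RCDS

variable {n : ℕ} {X Y Z : Matrix (Fin n) (Fin n) ℝ}

lemma add (hX : RCDS X) (hY : RCDS Y) (hXY : ∀ i j, 0 < X i j ↔ 0 < Y i j) : RCDS (X + Y) := by
  have hpos : ∀ i j, 0 < (X + Y) i j → 0 < X i j ∧ 0 < Y i j := fun i j h => by
    have hXij : 0 < X i j := by
      by_contra hx
      have hy := mt (hXY i j).2 hx
      rw [Matrix.add_apply] at h
      linarith
    exact ⟨hXij, (hXY i j).1 hXij⟩
  intro σ τ hσ hτ
  simp only [Matrix.add_apply, sum_add_distrib]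
  rw [hX σ τ (fun i => (hpos _ _ (hσ i)).1) (fun i => (hpos _ _ (hτ i)).1),
    hY σ τ (fun i => (hpos _ _ (hσ i)).2) (fun i => (hpos _ _ (hτ i)).2)]

lemma smul (hX : RCDS X) {c : ℝ} (hc : 0 < c) : RCDS (c • X) := by
  intro σ τ hσ hτ
  simp only [Matrix.smul_apply, smul_eq_mul, ← mul_sum] at hσ hτ ⊢
  rw [hX σ τ (fun i => pos_of_mul_pos_right (hσ i) hc.le)
    (fun i => pos_of_mul_pos_right (hτ i) hc.le)]

lemma transpose (hX : RCDS X) : RCDS Xᵀ := by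
  have hsum : ∀ σ : Equiv.Perm (Fin n), ∑ i, Xᵀ i (σ i) = ∑ i, X i (σ⁻¹ i) := fun σ =>
    (Equiv.sum_comp σ⁻¹ fun i => X (σ i) i).symm.trans (by simp)
  have hpos : ∀ σ : Equiv.Perm (Fin n), (∀ i, 0 < Xᵀ i (σ i)) → ∀ i, 0 < X i (σ⁻¹ i) :=
    fun σ h i => by simpa using h (σ⁻¹ i)
  intro σ τ hσ hτ
  rw [hsum, hsum]
  exact hX _ _ (hpos σ hσ) (hpos τ hτ)

lemma sum_mul_eq_sum_diag (hZ : RCDS Z) (hX : X ∈ doublyStochastic ℝ (Fin n))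
    (hXZ : ∀ i j, X i j ≠ 0 → 0 < Z i j) {σ₀ : Equiv.Perm (Fin n)}
    (hσ₀ : ∀ i, 0 < Z i (σ₀ i)) : ∑ i, ∑ j, Z i j * X i j = ∑ i, Z i (σ₀ i) := by
  obtain ⟨w, hw0, hw1, rfl⟩ := exists_eq_sum_perm_of_mem_doublyStochastic hX
  rw [sum_mul_sum_smul_permMatrix_apply]
  calc ∑ σ, w σ * ∑ i, Z i (σ i) = ∑ σ, w σ * ∑ i, Z i (σ₀ i) := by
        refine sum_congr rfl fun σ _ => ?_
        rcases (hw0 σ).eq_or_lt with h | h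
        · simp [← h]
        · rw [hZ σ σ₀ (fun i => hXZ _ _ (h.trans_le (le_sum_smul_permMatrix_apply hw0 σ i)).ne')
            hσ₀]
    _ = ∑ i, Z i (σ₀ i) := by rw [← sum_mul, hw1, one_mul]

lemma sum_mul_eq_zero (hZ : Z ∈ doublyStochastic ℝ (Fin n)) (hR : RCDS Z)
    {M : Matrix (Fin n) (Fin n) ℝ} (hMZ : ∀ i j, Z i j = 0 → M i j = 0)
    (hrow : ∀ i, ∑ j, M i j = 0) (hcol : ∀ j, ∑ i, M i j = 0) :
    ∑ i, ∑ j, Z i j * M i j = 0 := by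
  obtain ⟨ε, hε, hZM⟩ := exists_pos_add_smul_mem_doublyStochastic hZ hMZ hrow hcol
  obtain ⟨σ₀, hσ₀⟩ := exists_perm_forall_pos_of_mem_doublyStochastic hZ
  have hsupp : ∀ c : ℝ, ∀ i j, (Z + c • M) i j ≠ 0 → 0 < Z i j := fun c i j h =>
    (nonneg_of_mem_doublyStochastic hZ).lt_of_ne' fun hz => h (by simp [hz, hMZ i j hz])
  have hmoved := hR.sum_mul_eq_sum_diag hZM (hsupp ε) hσ₀
  have hstill := hR.sum_mul_eq_sum_diag hZ (by simpa using hsupp 0) hσ₀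
  rw [← hstill] at hmoved
  simp only [Matrix.add_apply, Matrix.smul_apply, smul_eq_mul, mul_add, sum_add_distrib,
    add_eq_left, mul_left_comm _ ε, ← mul_sum] at hmoved
  exact (mul_eq_zero.1 hmoved).resolve_left hε.ne'

lemma exists_eq_mul_add {A : Matrix (Fin n) (Fin n) ℝ} (hA : ∀ i j, A i j = 0 ∨ A i j = 1)
    (hZ : Z ∈ doublyStochastic ℝ (Fin n)) (hR : RCDS Z) (hZA : ∀ i j, Z i j = 0 ↔ A i j = 0) :
    ∃ u v : Fin n → ℝ, ∀ i j, Z i j = A i j * (u i + v j) := by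
  let T : ((Fin n → ℝ) × (Fin n → ℝ)) →ₗ[ℝ] (Fin n × Fin n → ℝ) :=
    { toFun := fun uv p => A p.1 p.2 * (uv.1 p.1 + uv.2 p.2)
      map_add' := fun _ _ => by ext; simp only [Prod.fst_add, Prod.snd_add, Pi.add_apply]; ring
      map_smul' := fun _ _ => by ext; simp; ring }
  have hZA_mul : ∀ i j, Z i j * A i j = Z i j := fun i j => by
    rcases hA i j with h | h <;> simp [h, (hZA i j).2]
  obtain ⟨⟨u, v⟩, huv⟩ : (fun p : Fin n × Fin n => Z p.1 p.2) ∈ LinearMap.range T := by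
    refine Submodule.mem_of_forall_dotProduct_eq_zero fun m hm => ?_
    have hT : ∀ u v : Fin n → ℝ, ∑ i, ∑ j, A i j * m (i, j) * (u i + v j) = 0 := fun u v => by
      simpa [T, dotProduct, Fintype.sum_prod_type, mul_right_comm] using hm _ ⟨(u, v), rfl⟩
    have hrow : ∀ i, ∑ j, A i j * m (i, j) = 0 := fun i => by
      simpa [Pi.single_apply] using hT (Pi.single i 1) 0
    have hcol : ∀ j, ∑ i, A i j * m (i, j) = 0 := fun j => by
      simpa [Pi.single_apply, sum_comm (γ := Fin n)] using hT 0 (Pi.single j 1)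
    have := hR.sum_mul_eq_zero hZ (M := Matrix.of fun i j => A i j * m (i, j))
      (fun i j h => by simp [(hZA i j).1 h]) hrow hcol
    simpa [dotProduct, Fintype.sum_prod_type, ← mul_assoc, hZA_mul] using this
  exact ⟨u, v, fun i j => (congrFun huv (i, j)).symm⟩

end RCDS

theorem rcds_symmetric_pattern_general {n : ℕ} (A : Matrix (Fin n) (Fin n) ℝ)
    (hA01 : ∀ i j, A i j = 0 ∨ A i j = 1)
    (hsymm : A.IsSymm)
    (hpat : ∃ X : Matrix (Fin n) (Fin n) ℝ, DoublyStochastic X ∧ RCDS X ∧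
        (∀ i j, X i j = 0 ↔ A i j = 0)) :
    ∃ (X : Matrix (Fin n) (Fin n) ℝ) (w : Fin n → ℝ),
      DoublyStochastic X ∧ RCDS X ∧ X.IsSymm ∧
      (∀ i j, X i j = 0 ↔ A i j = 0) ∧
      (∀ i j, X i j = A i j * (w i + w j)) := by
  obtain ⟨Y, hY, hYR, hYA⟩ := hpat
  replace hY : Y ∈ doublyStochastic ℝ (Fin n) := mem_doublyStochastic_iff_sum.2 hY
  have hY0 : ∀ i j, 0 ≤ Y i j := fun i j => nonneg_of_mem_doublyStochastic hY
  have hYT : ∀ i j, Y j i = 0 ↔ Y i j = 0 := fun i j => by rw [hYA, hYA, hsymm.apply]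
  set Z := (2⁻¹ : ℝ) • (Y + Yᵀ) with hZdef
  have hZ : Z ∈ doublyStochastic ℝ (Fin n) := by
    rw [hZdef, smul_add]
    exact convex_doublyStochastic hY (transpose_mem_doublyStochastic_iff.2 hY)
      (by norm_num) (by norm_num) (by norm_num)
  have hZR : RCDS Z := by
    refine (hYR.add hYR.transpose fun i j => ?_).smul (by norm_num)
    rw [Matrix.transpose_apply, (hY0 i j).lt_iff_ne', (hY0 j i).lt_iff_ne', ne_eq, ne_eq, hYT]
  have hZA : ∀ i j, Z i j = 0 ↔ A i j = 0 := fun i j => by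
    rw [hZdef, Matrix.smul_apply, smul_eq_mul, mul_eq_zero, Matrix.add_apply,
      Matrix.transpose_apply, add_eq_zero_iff_of_nonneg (hY0 i j) (hY0 j i), hYT i j, and_self, hYA]
    norm_num
  have hZsymm : Z.IsSymm := (Matrix.isSymm_add_transpose_self Y).smul _
  obtain ⟨u, v, huv⟩ := hZR.exists_eq_mul_add hA01 hZ hZA
  obtain ⟨w, hw⟩ := exists_eq_mul_add_of_isSymm hsymm hZsymm huv
  exact ⟨Z, w, mem_doublyStochastic_iff_sum.1 hZ, hZR, hZsymm, hZA, hw⟩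

/-- If a fully indecomposable symmetric (0,1)-matrix `A` is the pattern of an
RCDS doubly stochastic matrix, then there are a *symmetric* RCDS doubly
stochastic matrix `X` with pattern `A` and a vector `w` with
`X i j = A i j * (w i + w j)` for all `i, j`. -/
theorem rcds_symmetric_pattern {n : ℕ} (A : Matrix (Fin n) (Fin n) ℝ)
    (hA01 : ∀ i j, A i j = 0 ∨ A i j = 1)
    (hsymm : A.IsSymm)
    (hFI : FullyIndecomposable A)
    (hpat : ∃ X : Matrix (Fin n) (Fin n) ℝ, DoublyStochastic X ∧ RCDS X ∧
        (∀ i j, X i j = 0 ↔ A i j = 0)) :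
    ∃ (X : Matrix (Fin n) (Fin n) ℝ) (w : Fin n → ℝ),
      DoublyStochastic X ∧ RCDS X ∧ X.IsSymm ∧
      (∀ i j, X i j = 0 ↔ A i j = 0) ∧
      (∀ i j, X i j = A i j * (w i + w j)) :=
  rcds_symmetric_pattern_general A hA01 hsymm hpat
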